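/- arXiv:1205.3105 — 2 statements merged into one kernel-verified Lean document; each statement's English description precedes it below -/
import Mathlib

section
/- For the complete graph K_n with n ≥ 2 and 1 ≤ m ≤ n−1, the m-th critical ideal admits the decomposition I_m(K_n,X) = ⋂_{I ⊆ [n], |I| = n−m+2} ⟨ x_i + 1 : i ∈ I ⟩ over a field (or over the integers). -/
/-!
The intersection is sandwiched: it contains every `m × m` minor, and it is contained in the ideal
generated by the products of `m - 1` distinct factors `x_i + 1`, each of which is, up to sign,
itself an `m × m` minor.
-/

open MvPolynomial Matrix

noncomputable def glap {P : Type} [CommRing P] {V : Type} [Fintype V] [DecidableEq V]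
    (m : V → V → ℕ) : Matrix V V (MvPolynomial V P) :=
  Matrix.of fun u v => if u = v then X u else - (m u v : MvPolynomial V P)

noncomputable def critIdeal {P : Type} [CommRing P] {V : Type} [Fintype V] [DecidableEq V]
    (m : V → V → ℕ) (i : ℕ) : Ideal (MvPolynomial V P) :=
  Ideal.span { p | ∃ r s : Fin i → V, Function.Injective r ∧ Function.Injective s ∧
    p = ((glap (P := P) m).submatrix r s).det }

def completeArcs (n : ℕ) : Fin n → Fin n → ℕ := fun u v => if u = v then 0 else 1

section XAddOne

variable {σ R : Type*} [CommRing R]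

noncomputable def spanXAddOne (I : Finset σ) : Ideal (MvPolynomial σ R) :=
  Ideal.span {p | ∃ i ∈ I, p = X i + 1}

noncomputable def spanProdXAddOne (U : Finset σ) (k : ℕ) : Ideal (MvPolynomial σ R) :=
  Ideal.span {q | ∃ S ⊆ U, S.card = k ∧ q = ∏ i ∈ S, (X i + 1)}

theorem X_add_one_mem_spanXAddOne {I : Finset σ} {i : σ} (hi : i ∈ I) :
    (X i + 1 : MvPolynomial σ R) ∈ spanXAddOne I :=
  Ideal.subset_span ⟨i, hi, rfl⟩

theorem spanXAddOne_empty : spanXAddOne (∅ : Finset σ) = (⊥ : Ideal (MvPolynomial σ R)) := by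
  simp [spanXAddOne]

theorem spanProdXAddOne_zero (U : Finset σ) :
    spanProdXAddOne U 0 = (⊤ : Ideal (MvPolynomial σ R)) :=
  (Ideal.eq_top_iff_one _).2 <| Ideal.subset_span ⟨∅, U.empty_subset, rfl, by simp⟩

theorem spanProdXAddOne_mono {U U' : Finset σ} (h : U ⊆ U') (k : ℕ) :
    (spanProdXAddOne U k : Ideal (MvPolynomial σ R)) ≤ spanProdXAddOne U' k :=
  Ideal.span_mono fun _ ⟨S, hS, hc, hq⟩ => ⟨S, hS.trans h, hc, hq⟩

theorem spanProdXAddOne_le_spanXAddOne {U I : Finset σ} {k : ℕ} (hIU : I ⊆ U)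
    (h : U.card < k + I.card) :
    (spanProdXAddOne U k : Ideal (MvPolynomial σ R)) ≤ spanXAddOne I := by
  classical
  refine Ideal.span_le.2 ?_
  rintro _ ⟨S, hSU, rfl, rfl⟩
  obtain ⟨i, hiS, hiI⟩ : ∃ i ∈ S, i ∈ I := by
    by_contra! hdisj
    have := Finset.card_le_card (Finset.union_subset hSU hIU)
    rw [Finset.card_union_of_disjoint (Finset.disjoint_left.2 hdisj)] at this
    omega
  rw [← Finset.mul_prod_erase S _ hiS]
  exact Ideal.mul_mem_right _ _ (X_add_one_mem_spanXAddOne hiI)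

theorem X_add_one_mul_mem_spanProdXAddOne [DecidableEq σ] {U : Finset σ} {j : σ} (hj : j ∉ U)
    {k : ℕ} {q : MvPolynomial σ R} (hq : q ∈ spanProdXAddOne U k) :
    (X j + 1) * q ∈ spanProdXAddOne (insert j U) (k + 1) := by
  suffices spanProdXAddOne U k ≤
      (spanProdXAddOne (insert j U) (k + 1)).colon {(X j + 1 : MvPolynomial σ R)} by
    simpa [mul_comm] using Submodule.mem_colon_singleton.1 (this hq)
  refine Ideal.span_le.2 ?_
  rintro _ ⟨S, hSU, rfl, rfl⟩
  have hjS : j ∉ S := fun h => hj (hSU h)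
  refine Submodule.mem_colon_singleton.2 (Ideal.subset_span ⟨insert j S,
    Finset.insert_subset_insert j hSU, Finset.card_insert_of_notMem hjS, ?_⟩)
  rw [Finset.prod_insert hjS, smul_eq_mul, mul_comm]

theorem spanXAddOne_singleton (j : σ) :
    spanXAddOne {j} = Ideal.span {(X j + 1 : MvPolynomial σ R)} := by
  simp [spanXAddOne]

variable [DecidableEq σ]

noncomputable def negOneSubst (I : Finset σ) : MvPolynomial σ R →ₐ[R] MvPolynomial σ R :=
  aeval fun i => if i ∈ I then -1 else X i

theorem negOneSubst_X_add_one_of_mem {I : Finset σ} {i : σ} (hi : i ∈ I) :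
    negOneSubst I (X i + 1 : MvPolynomial σ R) = 0 := by
  simp [negOneSubst, hi]

theorem negOneSubst_X_add_one_of_notMem {I : Finset σ} {i : σ} (hi : i ∉ I) :
    negOneSubst I (X i + 1 : MvPolynomial σ R) = X i + 1 := by
  simp [negOneSubst, hi]

theorem sub_negOneSubst_mem_spanXAddOne (I : Finset σ) (p : MvPolynomial σ R) :
    p - negOneSubst I p ∈ spanXAddOne I := by
  have hmk : (Ideal.Quotient.mkₐ R (spanXAddOne (R := R) I)).comp (negOneSubst I) =
      Ideal.Quotient.mkₐ R (spanXAddOne I) := by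
    refine MvPolynomial.algHom_ext fun i => ?_
    by_cases hi : i ∈ I
    · rw [AlgHom.comp_apply, negOneSubst, aeval_X, if_pos hi, Ideal.Quotient.mkₐ_eq_mk,
        Ideal.Quotient.mk_eq_mk_iff_sub_mem, ← neg_add', neg_mem_iff, add_comm]
      exact X_add_one_mem_spanXAddOne hi
    · simp [negOneSubst, hi]
  rw [← Ideal.Quotient.mk_eq_mk_iff_sub_mem]
  exact (DFunLike.congr_fun hmk p).symm

theorem ker_negOneSubst (I : Finset σ) :
    RingHom.ker (negOneSubst I : MvPolynomial σ R →ₐ[R] MvPolynomial σ R) = spanXAddOne I := by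
  refine le_antisymm (fun p hp => ?_) (Ideal.span_le.2 ?_)
  · simpa [(RingHom.mem_ker).1 hp] using sub_negOneSubst_mem_spanXAddOne I p
  · rintro _ ⟨i, hi, rfl⟩
    exact negOneSubst_X_add_one_of_mem hi

theorem mem_spanXAddOne_iff {I : Finset σ} {p : MvPolynomial σ R} :
    p ∈ spanXAddOne I ↔ negOneSubst I p = 0 := by
  rw [← ker_negOneSubst, RingHom.mem_ker]

theorem spanXAddOne_isPrime [IsDomain R] (I : Finset σ) :
    (spanXAddOne I : Ideal (MvPolynomial σ R)).IsPrime :=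
  ker_negOneSubst (R := R) I ▸ RingHom.ker_isPrime _

theorem X_add_one_notMem_spanXAddOne [Nontrivial R] {I : Finset σ} {j : σ} (hj : j ∉ I) :
    (X j + 1 : MvPolynomial σ R) ∉ spanXAddOne I := by
  rw [mem_spanXAddOne_iff, negOneSubst_X_add_one_of_notMem hj]
  intro h
  simpa using congrArg constantCoeff h

theorem negOneSubst_mem_spanXAddOne_sdiff {I : Finset σ} {p : MvPolynomial σ R}
    (hp : p ∈ spanXAddOne I) (J : Finset σ) : negOneSubst J p ∈ spanXAddOne (I \ J) := by
  suffices spanXAddOne I ≤ (spanXAddOne (I \ J)).comap (negOneSubst J) from this hp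
  refine Ideal.span_le.2 ?_
  rintro _ ⟨i, hi, rfl⟩
  by_cases hiJ : i ∈ J
  · simp [negOneSubst_X_add_one_of_mem hiJ]
  · simpa [negOneSubst_X_add_one_of_notMem hiJ] using
      X_add_one_mem_spanXAddOne (Finset.mem_sdiff.2 ⟨hi, hiJ⟩)

/-- Split off `x_j` as `p = (x_j + 1) q + r` with `r` free of `x_j`; primality of the ideals
`spanXAddOne I` with `j ∉ I` lets both `q` and `r` inherit the hypothesis on `U.erase j`. -/
theorem mem_spanProdXAddOne_of_forall_mem_spanXAddOne [IsDomain R] (U : Finset σ) {k c : ℕ}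
    (hkc : k + c = U.card + 1) {p : MvPolynomial σ R}
    (hp : ∀ I ⊆ U, I.card = c → p ∈ spanXAddOne I) : p ∈ spanProdXAddOne U k := by
  induction U using Finset.strongInduction generalizing k c p with
  | H U ih =>
    rcases c with _ | c
    · obtain rfl : p = 0 := by simpa [spanXAddOne_empty] using hp ∅ U.empty_subset rfl
      exact zero_mem _
    rcases k with _ | k
    · simp [spanProdXAddOne_zero]
    obtain ⟨j, hjU⟩ : U.Nonempty := Finset.card_pos.1 (by omega)
    have hjU' : j ∉ U.erase j := U.notMem_erase j
    have hcard : (U.erase j).card + 1 = U.card := Finset.card_erase_add_one hjU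
    have hr : negOneSubst {j} p ∈ spanProdXAddOne U (k + 1) := by
      refine spanProdXAddOne_mono (U.erase_subset j) _
        (ih _ (U.erase_ssubset hjU) (c := c) (by omega) fun I hI hIc => ?_)
      have hjI : j ∉ I := fun h => hjU' (hI h)
      have hpI : p ∈ spanXAddOne (insert j I) :=
        hp _ (Finset.insert_subset hjU (hI.trans (U.erase_subset j)))
          (by rw [Finset.card_insert_of_notMem hjI, hIc])
      simpa [Finset.insert_sdiff_of_mem, Finset.sdiff_singleton_eq_erase,
        Finset.erase_eq_of_notMem hjI] using negOneSubst_mem_spanXAddOne_sdiff hpI {j}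
    obtain ⟨q, hq⟩ : ∃ q, q * (X j + 1) = p - negOneSubst {j} p := by
      rw [← Ideal.mem_span_singleton', ← spanXAddOne_singleton]
      exact sub_negOneSubst_mem_spanXAddOne {j} p
    have hqU : q ∈ spanProdXAddOne (U.erase j) k := by
      refine ih _ (U.erase_ssubset hjU) (c := c + 1) (by omega) fun I hI hIc => ?_
      have hIU := hI.trans (U.erase_subset j)
      have hqI : q * (X j + 1) ∈ spanXAddOne I :=
        hq ▸ sub_mem (hp I hIU hIc) (spanProdXAddOne_le_spanXAddOne hIU (by omega) hr)
      exact ((spanXAddOne_isPrime I).mem_or_mem hqI).resolve_right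
        (X_add_one_notMem_spanXAddOne fun h => hjU' (hI h))
    have hjq := X_add_one_mul_mem_spanProdXAddOne hjU' hqU
    rw [Finset.insert_erase hjU] at hjq
    rw [show p = (X j + 1) * q + negOneSubst {j} p by linear_combination (-1) * hq]
    exact add_mem hjq hr

end XAddOne

theorem exists_ne_map_mem_of_injective {α β : Type*} [Fintype α] [Fintype β] {f : α → β}
    (hf : Function.Injective f) {I : Finset β}
    (h : Fintype.card β + 2 ≤ Fintype.card α + I.card) :
    ∃ a₁ a₂, a₁ ≠ a₂ ∧ f a₁ ∈ I ∧ f a₂ ∈ I := by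
  classical
  have hout : (Finset.univ.filter fun a => f a ∉ I).card ≤ Iᶜ.card :=
    Finset.card_le_card_of_injOn f (fun a ha => by simpa using ha) hf.injOn
  have hsplit := Finset.card_filter_add_card_filter_not (s := Finset.univ) fun a => f a ∈ I
  rw [Finset.card_compl] at hout
  have hI := I.card_le_univ
  rw [Finset.card_univ] at hsplit
  obtain ⟨a₁, h₁, a₂, h₂, hne⟩ :=
    Finset.one_lt_card.1 (show 1 < (Finset.univ.filter fun a => f a ∈ I).card by omega)
  exact ⟨a₁, a₂, hne, (Finset.mem_filter.1 h₁).2, (Finset.mem_filter.1 h₂).2⟩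

theorem det_bordered_neg_one {R : Type*} [CommRing R] (w : ℕ) (z : Fin (w + 1) → R) :
    (Matrix.of fun i j : Fin (w + 1) => if i = j ∧ i ≠ Fin.last w then z i else -1).det =
      -∏ i : Fin w, (z i.castSucc + 1) := by
  -- subtracting the constant last row from the others leaves a lower triangular matrix
  rw [det_eq_of_forall_row_eq_smul_add_const (fun i => if i = Fin.last w then 0 else 1)
    (Fin.last w) (by simp)
    (B := Matrix.of fun i j => if i = Fin.last w then -1 else if i = j then z i + 1 else 0)]
  · rw [det_of_isLowerTriangular _ ?_, Fin.prod_univ_castSucc]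
    · simp [Fin.castSucc_ne_last]
    · intro i j (hij : i < j)
      simp [(hij.trans_le (Fin.le_last j)).ne, hij.ne]
  · intro i j
    by_cases hi : i = Fin.last w
    · simp [hi]
    · by_cases hij : i = j
      · subst hij
        simp [hi]
      · simp [hi, hij]

section CompleteGraph

variable {R : Type} [CommRing R] {n : ℕ}

theorem glap_completeArcs_apply (u v : Fin n) :
    glap (P := R) (completeArcs n) u v = if u = v then X u else -1 := by
  by_cases h : u = v <;> simp [glap, completeArcs, h]

theorem negOneSubst_glap_completeArcs_of_mem {I : Finset (Fin n)} {u : Fin n} (hu : u ∈ I)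
    (v : Fin n) : negOneSubst I (glap (P := R) (completeArcs n) u v) = -1 := by
  rw [glap_completeArcs_apply]
  split_ifs <;> simp [negOneSubst, hu]

/-- Modulo `spanXAddOne I`, every row of the Laplacian indexed by `I` becomes `(-1, …, -1)`,
and an `m × m` minor meets at least two such rows. -/
theorem critIdeal_completeArcs_le_spanXAddOne {m : ℕ} {I : Finset (Fin n)}
    (h : n + 2 ≤ m + I.card) : critIdeal (P := R) (completeArcs n) m ≤ spanXAddOne I := by
  refine Ideal.span_le.2 ?_
  rintro _ ⟨r, s, hr, -, rfl⟩
  obtain ⟨i₁, i₂, hne, hi₁, hi₂⟩ := exists_ne_map_mem_of_injective hr (I := I) (by simpa using h)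
  rw [SetLike.mem_coe, mem_spanXAddOne_iff, AlgHom.map_det]
  exact det_zero_of_row_eq hne (funext fun j => by
    simp [negOneSubst_glap_completeArcs_of_mem, hi₁, hi₂])

/-- The minor with rows `S ∪ {a}` and columns `S ∪ {b}`, the extra row and column placed last. -/
theorem prod_X_add_one_mem_critIdeal_completeArcs {w : ℕ} {S : Finset (Fin n)}
    (hS : S.card = w) {a b : Fin n} (ha : a ∉ S) (hb : b ∉ S) (hab : a ≠ b) :
    ∏ i ∈ S, (X i + 1 : MvPolynomial (Fin n) R) ∈ critIdeal (P := R) (completeArcs n) (w + 1) := by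
  set e := S.orderEmbOfFin hS
  have he : ∀ {c}, c ∉ S → ∀ i, e i ≠ c := fun hc i h => hc (h ▸ S.orderEmbOfFin_mem hS i)
  have hminor : (glap (P := R) (completeArcs n)).submatrix (Fin.snoc ⇑e a) (Fin.snoc ⇑e b) =
      Matrix.of fun i j => if i = j ∧ i ≠ Fin.last w then X (Fin.snoc (α := fun _ => Fin n) e a i)
        else -1 := by
    refine Matrix.ext fun i j => ?_
    induction i using Fin.lastCases <;> induction j using Fin.lastCases <;>
      simp [glap_completeArcs_apply, hab, he hb, (he ha _).symm]
  have hprod : ∏ i ∈ S, (X i + 1 : MvPolynomial (Fin n) R) = ∏ i : Fin w, (X (e i) + 1) := by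
    rw [← S.image_orderEmbOfFin_univ hS, Finset.prod_image (fun i _ j _ h => e.injective h)]
  have hdet := det_bordered_neg_one w fun i => (X (Fin.snoc (α := fun _ => Fin n) e a i) :
    MvPolynomial (Fin n) R)
  rw [← hminor] at hdet
  simp only [Fin.snoc_castSucc] at hdet
  rw [hprod, ← neg_neg (∏ i : Fin w, _), ← hdet]
  have hinj : ∀ {c}, c ∉ S → Function.Injective (Fin.snoc (α := fun _ => Fin n) e c) :=
    fun hc => Fin.snoc_injective_of_injective e.injective fun ⟨i, hi⟩ => he hc i hi
  exact neg_mem (Ideal.subset_span ⟨_, _, hinj ha, hinj hb, rfl⟩)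

theorem spanProdXAddOne_univ_le_critIdeal_completeArcs {w : ℕ} (hw : w + 2 ≤ n) :
    spanProdXAddOne Finset.univ w ≤ critIdeal (P := R) (completeArcs n) (w + 1) := by
  refine Ideal.span_le.2 ?_
  rintro _ ⟨S, -, hS, rfl⟩
  obtain ⟨a, ha, b, hb, hab⟩ := Finset.one_lt_card.1 (show 1 < Sᶜ.card by
    rw [Finset.card_compl, Fintype.card_fin]; omega)
  exact prod_X_add_one_mem_critIdeal_completeArcs hS (Finset.mem_compl.1 ha)
    (Finset.mem_compl.1 hb) hab

end CompleteGraph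

theorem critIdeal_complete_decomposition_general (n : ℕ) (m : ℕ)
    (h1 : 1 ≤ m) (hm : m ≤ n - 1) :
    critIdeal (P := ℤ) (completeArcs n) m
      = ⨅ (I : Finset (Fin n)) (_ : I.card = n - m + 2),
          Ideal.span { p : MvPolynomial (Fin n) ℤ | ∃ i ∈ I, p = X i + 1 } := by
  refine le_antisymm (le_iInf₂ fun I hI => critIdeal_completeArcs_le_spanXAddOne (by omega))
    fun p hp => ?_
  obtain ⟨w, rfl⟩ : ∃ w, m = w + 1 := ⟨m - 1, by omega⟩
  refine spanProdXAddOne_univ_le_critIdeal_completeArcs (by omega) <|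
    mem_spanProdXAddOne_of_forall_mem_spanXAddOne Finset.univ (c := n - (w + 1) + 2)
      (by rw [Finset.card_univ, Fintype.card_fin]; omega) fun I _ hI => ?_
  exact Ideal.mem_iInf.1 (Ideal.mem_iInf.1 hp I) hI

/-- Primary decomposition of the critical ideals of the complete graph over `ℤ`:
for `n ≥ 2` and `1 ≤ m ≤ n − 1`,
`I_m(K_n, X) = ⋂_{I ⊆ [n], |I| = n − m + 2} ⟨ x_i + 1 : i ∈ I ⟩`. -/
theorem critIdeal_complete_decomposition (n : ℕ) (hn : 2 ≤ n) (m : ℕ)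
    (h1 : 1 ≤ m) (hm : m ≤ n - 1) :
    critIdeal (P := ℤ) (completeArcs n) m
      = ⨅ (I : Finset (Fin n)) (_ : I.card = n - m + 2),
          Ideal.span { p : MvPolynomial (Fin n) ℤ | ∃ i ∈ I, p = X i + 1 } :=
  critIdeal_complete_decomposition_general n m h1 hm
end

section
/- For the cycle C_n (n ≥ 4), I_i(C_n,X) = (1) for all 1 ≤ i ≤ n−2; that is, the generalized Laplacian of C_n has an (n−2)×(n−2) minor equal to ±1, so γ_P(C_n) ≥ n−2. -/
open MvPolynomial Matrix

noncomputable def gammaP (P : Type) [CommRing P] {V : Type} [Fintype V] [DecidableEq V]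
    (m : V → V → ℕ) : ℕ :=
  sSup {i : ℕ | critIdeal (P := P) m i = ⊤}

/-- Arc multiplicities of the cycle on `n` vertices (indices taken mod `n`). -/
def cycleArcs (n : ℕ) [NeZero n] : Fin n → Fin n → ℕ :=
  fun i j => if j = i + 1 ∨ i = j + 1 then 1 else 0

/-! The minor of `L(C_n, X)` on rows `1, …, i` and columns `0, …, i - 1` is upper triangular
as long as `i ≤ n - 2`: the row indices stay below `n - 1`, so the wrap-around edge
`{n - 1, 0}` never lands below the diagonal, and the diagonal consists of the edges
`{j + 1, j}`. Its determinant is therefore `(-1) ^ i`, a unit, so every `I_i` with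
`i ≤ n - 2` is the unit ideal. -/

section CriticalIdeals

variable {P : Type} [CommRing P] {V : Type} [Fintype V] [DecidableEq V] {m : V → V → ℕ}

lemma glap_apply_of_ne {u v : V} (h : u ≠ v) :
    glap (P := P) m u v = -(m u v : MvPolynomial V P) := by
  simp [glap, h]

lemma critIdeal_eq_top_of_isUnit_det {i : ℕ} {r s : Fin i → V}
    (hr : Function.Injective r) (hs : Function.Injective s)
    (hdet : IsUnit ((glap (P := P) m).submatrix r s).det) :
    critIdeal (P := P) m i = ⊤ :=
  Ideal.eq_top_of_isUnit_mem _ (Ideal.subset_span ⟨r, s, hr, hs, rfl⟩) hdet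

lemma critIdeal_eq_bot_of_card_lt {i : ℕ} (hi : Fintype.card V < i) :
    critIdeal (P := P) m i = ⊥ := by
  rw [critIdeal, Ideal.span_eq_bot]
  rintro _ ⟨r, -, hr, -, -⟩
  have := Fintype.card_le_of_injective r hr
  rw [Fintype.card_fin] at this
  omega

lemma le_gammaP [Nontrivial P] {i : ℕ} (hi : critIdeal (P := P) m i = ⊤) :
    i ≤ gammaP P m := by
  refine le_csSup ⟨Fintype.card V, fun j hj => ?_⟩ hi
  by_contra! hlt
  have hj : critIdeal (P := P) m j = ⊤ := hj
  exact top_ne_bot (hj.symm.trans (critIdeal_eq_bot_of_card_lt hlt))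

end CriticalIdeals

section Cycle

variable {n : ℕ} [NeZero n]

lemma cycleArcs_eq_one_of_val_eq_succ {u v : Fin n} (h : (u : ℕ) = v + 1) :
    cycleArcs n u v = 1 := by
  have huv : u = v + 1 := Fin.ext <| by rw [Fin.val_add_one_of_lt' (h ▸ u.isLt), h]
  simp [cycleArcs, huv]

lemma cycleArcs_eq_zero_of_succ_lt {u v : Fin n} (hvu : (v : ℕ) + 1 < u)
    (hun : (u : ℕ) + 1 < n) : cycleArcs n u v = 0 := by
  have hvu' : v ≠ u + 1 := fun h => by
    have := congrArg Fin.val h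
    rw [Fin.val_add_one_of_lt' hun] at this
    omega
  have huv' : u ≠ v + 1 := fun h => by
    have := congrArg Fin.val h
    rw [Fin.val_add_one_of_lt' (by omega)] at this
    omega
  simp [cycleArcs, hvu', huv']

lemma det_cycle_staircase_minor (P : Type) [CommRing P] {i : ℕ} (hi : i + 2 ≤ n)
    {r s : Fin i → Fin n} (hr : ∀ j, (r j : ℕ) = j + 1) (hs : ∀ j, (s j : ℕ) = j) :
    ((glap (P := P) (cycleArcs n)).submatrix r s).det = (-1) ^ i := by
  have hoff : ∀ a b : Fin i, b ≤ a → ((glap (P := P) (cycleArcs n)).submatrix r s) a b =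
      -(cycleArcs n (r a) (s b) : MvPolynomial (Fin n) P) := fun a b hba =>
    glap_apply_of_ne fun h => by
      have := congrArg Fin.val h
      rw [hr, hs] at this
      omega
  have hupper : ((glap (P := P) (cycleArcs n)).submatrix r s).IsUpperTriangular := by
    intro a b (hba : (b : ℕ) < a)
    rw [hoff a b hba.le, cycleArcs_eq_zero_of_succ_lt (by rw [hr, hs]; omega) (by rw [hr]; omega),
      Nat.cast_zero, neg_zero]
  have hdiag : ∀ j, ((glap (P := P) (cycleArcs n)).submatrix r s) j j = -1 := fun j => by
    rw [hoff j j le_rfl, cycleArcs_eq_one_of_val_eq_succ (by rw [hr, hs]), Nat.cast_one]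
  rw [det_of_isUpperTriangular hupper, Finset.prod_congr rfl fun j _ => hdiag j,
    Finset.prod_const, Finset.card_univ, Fintype.card_fin]

lemma critIdeal_cycleArcs_eq_top (P : Type) [CommRing P] {i : ℕ} (hi : i + 2 ≤ n) :
    critIdeal (P := P) (cycleArcs n) i = ⊤ := by
  have hle : i + 1 ≤ n := by omega
  refine critIdeal_eq_top_of_isUnit_det (r := fun j => Fin.castLE hle j.succ)
    (s := fun j => Fin.castLE hle j.castSucc)
    ((Fin.castLE_injective hle).comp (Fin.succ_injective i))
    ((Fin.castLE_injective hle).comp (Fin.castSucc_injective i)) ?_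
  rw [det_cycle_staircase_minor P hi (fun j => by simp) (fun j => by simp)]
  exact isUnit_one.neg.pow i

end Cycle

/-- For the cycle `C_n` with `n = k + 4 ≥ 4` vertices: `I_i(C_n,X) = (1)` for all
`1 ≤ i ≤ n − 2`; the `(n−2) × (n−2)` minor obtained by deleting rows `{1, n}` and columns
`{n−1, n}` equals `±1`; hence `γ_P(C_n) ≥ n − 2`. -/
theorem critIdeal_cycle_trivial (P : Type) [CommRing P] [Nontrivial P] (k : ℕ) :
    (∀ i : ℕ, 1 ≤ i → i ≤ k + 2 → critIdeal (P := P) (cycleArcs (k + 4)) i = ⊤) ∧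
    (((glap (P := P) (cycleArcs (k + 4))).submatrix
        (fun i : Fin (k + 2) => i.succ.castSucc)
        (fun i : Fin (k + 2) => i.castSucc.castSucc)).det = 1 ∨
      ((glap (P := P) (cycleArcs (k + 4))).submatrix
        (fun i : Fin (k + 2) => i.succ.castSucc)
        (fun i : Fin (k + 2) => i.castSucc.castSucc)).det = -1) ∧
    k + 2 ≤ gammaP P (cycleArcs (k + 4)) := by
  refine ⟨fun i _ hi => critIdeal_cycleArcs_eq_top P (by omega), ?_,
    le_gammaP (critIdeal_cycleArcs_eq_top P le_rfl)⟩
  rw [det_cycle_staircase_minor P le_rfl (fun j => by simp) (fun j => by simp)]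
  exact (Nat.even_or_odd (k + 2)).imp Even.neg_one_pow Odd.neg_one_pow
end
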